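/- arXiv:2412.00780 — 2 statements merged into one kernel-verified Lean document; each statement's English description precedes it below -/
import Mathlib

section
/- Let 1 < α < 2, ρ > 0 and R ≥ 0. Then the function θ(λ) = α·λ·(λ² + ρ²)^{−(1−α/2)} is odd and strictly increasing on ℝ, and the phase ψ_R has exactly one stationary point λ₁ on ℝ (i.e. exactly one solution of θ(λ₁) = R), which is nonnegative. Moreover there exist constants c, C > 0 depending only on α and ρ such that c·R ≤ λ₁ ≤ C·R whenever 0 ≤ R ≤ 1 and c·R^{1/(α−1)} ≤ λ₁ ≤ C·R^{1/(α−1)} whenever R ≥ 1; furthermore θ(λ) ≤ α·λ^{α−1} for all λ > 0, and consequently λ₁ ≥ (R/α)^{1/(α−1)} for all R > 0. -/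
/-!
Write `θ(λ) = α λ (λ² + ρ²)^{α/2 - 1}`. Its derivative `α (λ² + ρ²)^{α/2 - 2} ((α - 1) λ² + ρ²)` is
positive, so `θ` is a strictly increasing odd continuous map with `θ(λ) ≥ c λ^{α-1}` for large `λ`,
hence a bijection of `ℝ` whose root of `θ = R` has the sign of `R`. Since `α/2 - 1 ≤ 0`, the factor
`(λ² + ρ²)^{α/2 - 1}` is squeezed between its values at comparable arguments: on a bounded range of
`λ ≥ 0` it is comparable to a constant, so `θ(λ) ≍ λ`, while for `λ ≥ ρ` it lies between
`(2λ²)^{α/2 - 1}` and `(λ²)^{α/2 - 1}`, so `θ(λ) ≍ λ^{α-1}`. Inverting these comparisons gives the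
two regimes for the root.
-/

/-- `θ(λ) = α·λ·(λ² + ρ²)^{−(1−α/2)}`. -/
noncomputable def theta (α ρ lam : ℝ) : ℝ :=
  α * lam * (lam ^ 2 + ρ ^ 2) ^ (-(1 - α / 2))

/-- The phase `ψ_R(λ) = (λ² + ρ²)^{α/2} − R·λ`. -/
noncomputable def psi (α ρ R lam : ℝ) : ℝ :=
  (lam ^ 2 + ρ ^ 2) ^ (α / 2) - R * lam

open Filter

section Theta

variable {α ρ : ℝ}

lemma theta_eq (x : ℝ) : theta α ρ x = α * x * (x ^ 2 + ρ ^ 2) ^ (α / 2 - 1) := by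
  rw [theta, neg_sub]

lemma theta_neg (x : ℝ) : theta α ρ (-x) = -theta α ρ x := by
  simp only [theta, neg_sq]; ring

@[simp] lemma theta_zero : theta α ρ 0 = 0 := by simp [theta]

lemma hasDerivAt_theta (hρ : 0 < ρ) (x : ℝ) :
    HasDerivAt (theta α ρ) (α * (x ^ 2 + ρ ^ 2) ^ (α / 2 - 2) * ((α - 1) * x ^ 2 + ρ ^ 2)) x := by
  have hg : 0 < x ^ 2 + ρ ^ 2 := by positivity
  have h := ((hasDerivAt_id' x).mul (((hasDerivAt_pow 2 x).add_const (ρ ^ 2)).rpow_const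
    (p := α / 2 - 1) (Or.inl hg.ne'))).const_mul α
  rw [show theta α ρ = fun y => α * (y * (y ^ 2 + ρ ^ 2) ^ (α / 2 - 1)) from
    funext fun y => by rw [theta_eq, mul_assoc]]
  refine h.congr_deriv ?_
  rw [show α / 2 - 1 - 1 = α / 2 - 2 by ring, show α / 2 - 1 = α / 2 - 2 + 1 by ring,
    Real.rpow_add_one hg.ne']
  norm_num
  ring

lemma continuous_theta (hρ : 0 < ρ) : Continuous (theta α ρ) :=
  continuous_iff_continuousAt.2 fun x => (hasDerivAt_theta hρ x).continuousAt

lemma theta_strictMono (hα : 1 ≤ α) (hρ : 0 < ρ) : StrictMono (theta α ρ) := by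
  refine strictMono_of_hasDerivAt_pos (hasDerivAt_theta hρ) fun x => ?_
  have : 0 < (α - 1) * x ^ 2 + ρ ^ 2 := by nlinarith [sq_nonneg x]
  have : 0 < α := by linarith
  positivity

lemma theta_nonneg_iff (hα : 1 ≤ α) (hρ : 0 < ρ) {x : ℝ} : 0 ≤ theta α ρ x ↔ 0 ≤ x := by
  simpa using (theta_strictMono hα hρ).le_iff_le (a := 0) (b := x)

lemma theta_pos_iff (hα : 1 ≤ α) (hρ : 0 < ρ) {x : ℝ} : 0 < theta α ρ x ↔ 0 < x := by
  simpa using (theta_strictMono hα hρ).lt_iff_lt (a := 0) (b := x)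

lemma mul_rpow_sq_eq {x c : ℝ} (hx : 0 < x) (hc : 0 ≤ c) (a : ℝ) :
    x * (c * x ^ 2) ^ (a / 2 - 1) = c ^ (a / 2 - 1) * x ^ (a - 1) := by
  rw [Real.mul_rpow hc (by positivity), ← Real.rpow_natCast_mul hx.le, mul_left_comm, mul_comm x,
    ← Real.rpow_add_one hx.ne']
  ring_nf

section Bounds

variable (hα0 : 0 ≤ α) (hα2 : α ≤ 2)
include hα0 hα2

lemma theta_le_mul (hρ : 0 < ρ) {x : ℝ} (hx : 0 ≤ x) :
    theta α ρ x ≤ α * (ρ ^ 2) ^ (α / 2 - 1) * x := by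
  rw [theta_eq, mul_right_comm α x]
  gcongr α * ?_ * x
  exact Real.rpow_le_rpow_of_nonpos (by positivity) (by nlinarith) (by linarith)

lemma mul_le_theta (hρ : 0 < ρ) {x M : ℝ} (hx : 0 ≤ x) (hxM : x ≤ M) :
    α * (M ^ 2 + ρ ^ 2) ^ (α / 2 - 1) * x ≤ theta α ρ x := by
  rw [theta_eq, mul_right_comm α x]
  gcongr α * ?_ * x
  exact Real.rpow_le_rpow_of_nonpos (by positivity) (by nlinarith) (by linarith)

lemma theta_le_rpow {x : ℝ} (hx : 0 < x) : theta α ρ x ≤ α * x ^ (α - 1) := by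
  calc theta α ρ x ≤ α * (x * (1 * x ^ 2) ^ (α / 2 - 1)) := by
        rw [theta_eq, mul_assoc]
        gcongr α * (x * ?_)
        exact Real.rpow_le_rpow_of_nonpos (by positivity) (by nlinarith) (by linarith)
    _ = α * x ^ (α - 1) := by rw [mul_rpow_sq_eq hx zero_le_one, Real.one_rpow, one_mul]

lemma rpow_le_theta (hρ : 0 < ρ) {x : ℝ} (hρx : ρ ≤ x) :
    α * 2 ^ (α / 2 - 1) * x ^ (α - 1) ≤ theta α ρ x := by
  have hx : 0 < x := hρ.trans_le hρx
  calc α * 2 ^ (α / 2 - 1) * x ^ (α - 1) = α * (x * (2 * x ^ 2) ^ (α / 2 - 1)) := by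
        rw [mul_rpow_sq_eq hx zero_le_two, mul_assoc]
    _ ≤ theta α ρ x := by
        rw [theta_eq, mul_assoc]
        gcongr α * (x * ?_)
        exact Real.rpow_le_rpow_of_nonpos (by positivity) (by nlinarith) (by linarith)

end Bounds

lemma tendsto_theta_atTop (hα1 : 1 < α) (hα2 : α ≤ 2) (hρ : 0 < ρ) :
    Tendsto (theta α ρ) atTop atTop := by
  refine tendsto_atTop_mono' _ ?_ <| (tendsto_rpow_atTop (sub_pos.2 hα1)).const_mul_atTop
    (by positivity : 0 < α * 2 ^ (α / 2 - 1))
  filter_upwards [eventually_ge_atTop ρ] with x hρx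
  exact rpow_le_theta (by linarith) hα2 hρ hρx

lemma theta_surjective (hα1 : 1 < α) (hα2 : α ≤ 2) (hρ : 0 < ρ) :
    Function.Surjective (theta α ρ) := by
  have h_top := tendsto_theta_atTop hα1 hα2 hρ
  have h_odd : theta α ρ = fun x => -theta α ρ (-x) := funext fun x => by rw [theta_neg, neg_neg]
  refine (continuous_theta hρ).surjective h_top ?_
  rw [h_odd]
  exact tendsto_neg_atTop_atBot.comp (h_top.comp tendsto_neg_atBot_atTop)

lemma rpow_div_le_of_theta_eq (hα1 : 1 < α) (hα2 : α ≤ 2) (hρ : 0 < ρ) {R x : ℝ} (hR : 0 < R)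
    (hx : theta α ρ x = R) : (R / α) ^ (1 / (α - 1)) ≤ x := by
  have hx0 : 0 < x := (theta_pos_iff hα1.le hρ).1 (hx ▸ hR)
  have hα : 0 < α := by linarith
  rw [one_div, Real.rpow_inv_le_iff_of_pos (by positivity) hx0.le (sub_pos.2 hα1),
    div_le_iff₀' hα, ← hx]
  exact theta_le_rpow hα.le hα2 hx0

lemma exists_linear_bounds_of_theta_le_one (hα1 : 1 < α) (hα2 : α ≤ 2) (hρ : 0 < ρ) :
    ∃ c C : ℝ, 0 < c ∧ 0 < C ∧ ∀ x, 0 ≤ theta α ρ x → theta α ρ x ≤ 1 →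
      c * theta α ρ x ≤ x ∧ x ≤ C * theta α ρ x := by
  obtain ⟨M, hM⟩ := ((tendsto_theta_atTop hα1 hα2 hρ).eventually_ge_atTop 1).exists
  have hα : 0 < α := by linarith
  refine ⟨(α * (ρ ^ 2) ^ (α / 2 - 1))⁻¹, (α * (M ^ 2 + ρ ^ 2) ^ (α / 2 - 1))⁻¹,
    by positivity, by positivity, fun x hθ0 hθ1 => ⟨?_, ?_⟩⟩
  · rw [inv_mul_le_iff₀ (by positivity)]
    exact theta_le_mul hα.le hα2 hρ ((theta_nonneg_iff hα1.le hρ).1 hθ0)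
  · rw [le_inv_mul_iff₀ (by positivity)]
    exact mul_le_theta hα.le hα2 hρ ((theta_nonneg_iff hα1.le hρ).1 hθ0)
      ((theta_strictMono hα1.le hρ).le_iff_le.1 (hθ1.trans hM))

lemma exists_rpow_bounds_of_one_le_theta (hα1 : 1 < α) (hα2 : α ≤ 2) (hρ : 0 < ρ) :
    ∃ c C : ℝ, 0 < c ∧ 0 < C ∧ ∀ x, 1 ≤ theta α ρ x →
      c * theta α ρ x ^ (1 / (α - 1)) ≤ x ∧ x ≤ C * theta α ρ x ^ (1 / (α - 1)) := by
  have hα : 0 < α := by linarith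
  have hβ : 0 < 1 / (α - 1) := one_div_pos.2 (sub_pos.2 hα1)
  set K := α * 2 ^ (α / 2 - 1)
  refine ⟨α⁻¹ ^ (1 / (α - 1)), max ρ (K⁻¹ ^ (1 / (α - 1))), by positivity,
    lt_max_of_lt_left hρ, fun x hθ => ⟨?_, ?_⟩⟩
  · rw [← Real.mul_rpow (by positivity) (by linarith), inv_mul_eq_div]
    exact rpow_div_le_of_theta_eq hα1 hα2 hρ (by linarith) rfl
  · have hRβ : 1 ≤ theta α ρ x ^ (1 / (α - 1)) := Real.one_le_rpow hθ hβ.le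
    rcases le_total ρ x with hρx | hxρ
    · have hx : x ≤ (K⁻¹ * theta α ρ x) ^ (1 / (α - 1)) := by
        rw [one_div, Real.le_rpow_inv_iff_of_pos (by linarith) (by positivity) (sub_pos.2 hα1),
          le_inv_mul_iff₀ (by positivity)]
        exact rpow_le_theta hα.le hα2 hρ hρx
      rw [Real.mul_rpow (by positivity) (by linarith)] at hx
      exact hx.trans (by gcongr; exact le_max_right _ _)
    · calc x ≤ ρ * 1 := by linarith
        _ ≤ max ρ (K⁻¹ ^ (1 / (α - 1))) * theta α ρ x ^ (1 / (α - 1)) := by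
          gcongr
          exact le_max_left _ _

end Theta

theorem stmt0 (α ρ : ℝ) (hα1 : 1 < α) (hα2 : α < 2) (hρ : 0 < ρ) :
    (∀ lam : ℝ, theta α ρ (-lam) = - theta α ρ lam) ∧
    StrictMono (theta α ρ) ∧
    (∀ R : ℝ, 0 ≤ R → (∃! lam1 : ℝ, theta α ρ lam1 = R) ∧
      ∀ lam1 : ℝ, theta α ρ lam1 = R → 0 ≤ lam1) ∧
    (∃ c C : ℝ, 0 < c ∧ 0 < C ∧ ∀ R lam1 : ℝ, theta α ρ lam1 = R →
      ((0 ≤ R → R ≤ 1 → c * R ≤ lam1 ∧ lam1 ≤ C * R) ∧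
       (1 ≤ R → c * R ^ (1 / (α - 1)) ≤ lam1 ∧ lam1 ≤ C * R ^ (1 / (α - 1))))) ∧
    (∀ lam : ℝ, 0 < lam → theta α ρ lam ≤ α * lam ^ (α - 1)) ∧
    (∀ R lam1 : ℝ, 0 < R → theta α ρ lam1 = R → (R / α) ^ (1 / (α - 1)) ≤ lam1) := by
  have hmono := theta_strictMono hα1.le hρ
  obtain ⟨c₀, C₀, hc₀, hC₀, hsmall⟩ := exists_linear_bounds_of_theta_le_one hα1 hα2.le hρ
  obtain ⟨c₁, C₁, hc₁, hC₁, hlarge⟩ := exists_rpow_bounds_of_one_le_theta hα1 hα2.le hρ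
  refine ⟨theta_neg, hmono, fun R hR => ⟨?_, fun x hx => (theta_nonneg_iff hα1.le hρ).1 (hx ▸ hR)⟩,
    ⟨min c₀ c₁, max C₀ C₁, lt_min hc₀ hc₁, lt_max_of_lt_left hC₀, ?_⟩,
    fun x hx => theta_le_rpow (by linarith) hα2.le hx,
    fun R x hR hx => rpow_div_le_of_theta_eq hα1 hα2.le hρ hR hx⟩
  · obtain ⟨x, hx⟩ := theta_surjective hα1 hα2.le hρ R
    exact ⟨x, hx, fun y hy => hmono.injective (hy.trans hx.symm)⟩
  · rintro R x rfl
    refine ⟨fun h0 h1 => ?_, fun h1 => ?_⟩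
    · obtain ⟨hlo, hhi⟩ := hsmall x h0 h1
      exact ⟨le_trans (by gcongr; exact min_le_left _ _) hlo,
        hhi.trans (by gcongr; exact le_max_left _ _)⟩
    · obtain ⟨hlo, hhi⟩ := hlarge x h1
      have hRβ : 0 ≤ theta α ρ x ^ (1 / (α - 1)) := Real.rpow_nonneg (by linarith) _
      exact ⟨le_trans (by gcongr; exact min_le_right _ _) hlo,
        hhi.trans (by gcongr; exact le_max_right _ _)⟩
end

section
/- Van der Corput lemma: let L ≥ 2 be an integer. Then there exists a constant C > 0, depending only on L, such that for every compact interval [u,v] ⊂ ℝ, every real-valued function Ψ of class C^L on [u,v] satisfying |Ψ^{(L)}(λ)| ≥ T for all λ ∈ [u,v] and some T > 0, and every complex-valued function a of class C¹ on [u,v], one has |∫_u^v a(λ) e^{iΨ(λ)} dλ| ≤ C · ( sup_{λ∈[u,v]} |a(λ)| + ∫_u^v |a′(λ)| dλ ) · T^{−1/L}. -/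
/-!
Induction on `L`, starting from the first-derivative test: if `Ψ'` is monotone and `|Ψ'| ≥ T`,
then `e^{iΨ} = (iΨ')⁻¹ (e^{iΨ})'`, and integrating by parts bounds the integral by the boundary
values and the total variation of `1/Ψ'`, all `O(1/T)`. For the inductive step, `|Ψ^{(L)}| ≥ T`
forces `|Ψ^{(L-1)}(x)| ≥ T |x - x₀|` for some `x₀`; away from the `δ`-neighbourhood of `x₀` the
induction hypothesis applies with lower bound `T δ`, the neighbourhood itself contributes at
most `2δ`, and `δ = T^{-1/L}` balances the two. The amplitude `a` is handled by one more
integration by parts against the primitive of `e^{iΨ}`.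
-/

open Set intervalIntegral Complex

theorem IsPreconnected.forall_le_or_forall_le_neg_of_le_abs {X : Type*} [TopologicalSpace X]
    {s : Set X} (hs : IsPreconnected s) {h : X → ℝ} (hc : ContinuousOn h s) {T : ℝ} (hT : 0 < T)
    (hh : ∀ x ∈ s, T ≤ |h x|) : (∀ x ∈ s, T ≤ h x) ∨ (∀ x ∈ s, h x ≤ -T) := by
  by_contra! hcon
  obtain ⟨⟨x₁, hx₁, hlt⟩, ⟨x₂, hx₂, hgt⟩⟩ := hcon
  have h₁ : h x₁ ≤ -T := by cases le_abs'.mp (hh x₁ hx₁) <;> linarith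
  have h₂ : T ≤ h x₂ := by cases le_abs'.mp (hh x₂ hx₂) <;> linarith
  obtain ⟨z, hz, hz0⟩ := hs.intermediate_value hx₁ hx₂ hc
    (show (0 : ℝ) ∈ Icc (h x₁) (h x₂) from ⟨by linarith, by linarith⟩)
  have := hh z hz
  rw [hz0, abs_zero] at this
  linarith

theorem exists_forall_mul_abs_sub_le_abs_of_le_deriv {A B T : ℝ} (hAB : A ≤ B) {g h : ℝ → ℝ}
    (hg : ∀ x ∈ Icc A B, HasDerivWithinAt g (h x) (Icc A B) x) (hh : ∀ x ∈ Icc A B, T ≤ h x) :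
    ∃ x₀ ∈ Icc A B, ∀ x ∈ Icc A B, T * |x - x₀| ≤ |g x| := by
  have hgc : ContinuousOn g (Icc A B) := fun x hx => (hg x hx).continuousWithinAt
  have mono : MonotoneOn (fun x => g x - T * x) (Icc A B) := by
    refine monotoneOn_of_hasDerivWithinAt_nonneg (f' := fun x => h x - T) (convex_Icc A B)
      (hgc.sub (continuousOn_const.mul continuousOn_id)) (fun x hx => ?_) (fun x hx => ?_)
    · rw [interior_Icc] at hx ⊢
      exact (((hg x (Ioo_subset_Icc_self hx)).mono Ioo_subset_Icc_self).sub
        ((hasDerivWithinAt_id x _).const_mul T)).congr_deriv (by ring)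
    · rw [interior_Icc] at hx
      exact sub_nonneg.mpr (hh x (Ioo_subset_Icc_self hx))
  -- growing at rate `≥ T`, `g` moves away from `0` on both sides of such an `x₀`
  have of_sign : ∀ x₀ ∈ Icc A B, (A < x₀ → g x₀ ≤ 0) → (x₀ < B → 0 ≤ g x₀) →
      ∀ x ∈ Icc A B, T * |x - x₀| ≤ |g x| := by
    intro x₀ hx₀ hleft hright x hx
    rcases lt_trichotomy x x₀ with hlt | rfl | hgt
    · have := mono hx hx₀ hlt.le
      have := hleft (hx.1.trans_lt hlt)
      rw [abs_of_neg (sub_neg.mpr hlt)]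
      nlinarith [neg_abs_le (g x)]
    · simp
    · have := mono hx₀ hx hgt.le
      have := hright (hgt.trans_le hx.2)
      rw [abs_of_pos (sub_pos.mpr hgt)]
      nlinarith [le_abs_self (g x)]
  rcases le_or_gt 0 (g A) with hA | hA
  · exact ⟨A, left_mem_Icc.mpr hAB, of_sign A (left_mem_Icc.mpr hAB) (by simp) fun _ => hA⟩
  rcases le_or_gt (g B) 0 with hB | hB
  · exact ⟨B, right_mem_Icc.mpr hAB, of_sign B (right_mem_Icc.mpr hAB) (fun _ => hB) (by simp)⟩
  obtain ⟨x₀, hx₀, hzero⟩ := intermediate_value_Icc hAB hgc ⟨hA.le, hB.le⟩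
  exact ⟨x₀, hx₀, of_sign x₀ hx₀ (fun _ => hzero.le) fun _ => hzero.ge⟩

theorem exists_forall_mul_abs_sub_le_abs_of_le_abs_deriv {A B T : ℝ} (hAB : A ≤ B) (hT : 0 < T)
    {g h : ℝ → ℝ} (hg : ∀ x ∈ Icc A B, HasDerivWithinAt g (h x) (Icc A B) x)
    (hc : ContinuousOn h (Icc A B)) (hh : ∀ x ∈ Icc A B, T ≤ |h x|) :
    ∃ x₀ ∈ Icc A B, ∀ x ∈ Icc A B, T * |x - x₀| ≤ |g x| := by
  rcases isPreconnected_Icc.forall_le_or_forall_le_neg_of_le_abs hc hT hh with hpos | hneg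
  · exact exists_forall_mul_abs_sub_le_abs_of_le_deriv hAB hg hpos
  · obtain ⟨x₀, hx₀, H⟩ := exists_forall_mul_abs_sub_le_abs_of_le_deriv hAB
      (fun x hx => (hg x hx).neg) fun x hx => le_neg_of_le_neg (hneg x hx)
    exact ⟨x₀, hx₀, fun x hx => by simpa using H x hx⟩

theorem integral_eq_sub_of_hasDerivWithinAt_Icc {E : Type*} [NormedAddCommGroup E]
    [NormedSpace ℝ E] [CompleteSpace E] {a b : ℝ} (hab : a ≤ b) {f f' : ℝ → E}
    (hf : ∀ x ∈ Icc a b, HasDerivWithinAt f (f' x) (Icc a b) x) (hf' : ContinuousOn f' (Icc a b)) :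
    ∫ x in a..b, f' x = f b - f a :=
  integral_eq_sub_of_hasDerivAt_of_le hab (fun x hx => (hf x hx).continuousWithinAt)
    (fun x hx => (hf x (Ioo_subset_Icc_self hx)).hasDerivAt (Icc_mem_nhds hx.1 hx.2))
    (hf'.intervalIntegrable_of_Icc hab)

theorem norm_integral_mul_le_of_norm_primitive_le {u v M : ℝ} (huv : u ≤ v) {a a' e : ℝ → ℂ}
    (ha : ∀ x ∈ Icc u v, HasDerivWithinAt a (a' x) (Icc u v) x)
    (ha' : ContinuousOn a' (Icc u v)) (he : ContinuousOn e (Icc u v))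
    (hM : ∀ x ∈ Icc u v, ‖∫ t in u..x, e t‖ ≤ M) :
    ‖∫ x in u..v, a x * e x‖ ≤ (‖a v‖ + ∫ x in u..v, ‖a' x‖) * M := by
  set F : ℝ → ℂ := fun x => ∫ t in u..x, e t
  have hF : ContinuousOn F (Icc u v) := by
    simpa only [uIcc_of_le huv] using
      continuousOn_primitive_interval' (he.intervalIntegrable_of_Icc huv) left_mem_uIcc
  have hF' : ∀ x ∈ Ioo u v, HasDerivAt F (e x) x := fun x hx =>
    integral_hasDerivAt_right
      (he.mono (uIcc_subset_Icc (left_mem_Icc.mpr huv) (Ioo_subset_Icc_self hx))).intervalIntegrable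
      ((he.mono Ioo_subset_Icc_self).stronglyMeasurableAtFilter isOpen_Ioo x hx)
      (he.continuousAt (Icc_mem_nhds hx.1 hx.2))
  have ibp : ∫ x in u..v, a x * e x = a v * F v - ∫ x in u..v, a' x * F x := by
    rw [integral_mul_deriv_eq_deriv_mul_of_hasDerivAt (u' := a') (v := F)]
    · rw [show F u = 0 from integral_same, mul_zero, sub_zero]
    · rw [uIcc_of_le huv]; exact fun x hx => (ha x hx).continuousWithinAt
    · rwa [uIcc_of_le huv]
    · rw [min_eq_left huv, max_eq_right huv]
      exact fun x hx => (ha x (Ioo_subset_Icc_self hx)).hasDerivAt (Icc_mem_nhds hx.1 hx.2)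
    · rwa [min_eq_left huv, max_eq_right huv]
    · exact ha'.intervalIntegrable_of_Icc huv
    · exact he.intervalIntegrable_of_Icc huv
  calc ‖∫ x in u..v, a x * e x‖
      ≤ ‖a v‖ * ‖F v‖ + ∫ x in u..v, ‖a' x‖ * ‖F x‖ := by
        rw [ibp, ← norm_mul]
        refine (norm_sub_le _ _).trans (add_le_add le_rfl ?_)
        exact (norm_integral_le_integral_norm huv).trans_eq (by simp only [norm_mul])
    _ ≤ ‖a v‖ * M + ∫ x in u..v, ‖a' x‖ * M := by
        gcongr
        · exact hM v (right_mem_Icc.mpr huv)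
        · refine integral_mono_on huv ?_ ?_ fun x hx => by gcongr; exact hM x hx
          · exact (ha'.norm.mul hF.norm).intervalIntegrable_of_Icc huv
          · exact (ha'.norm.mul continuousOn_const).intervalIntegrable_of_Icc huv
    _ = (‖a v‖ + ∫ x in u..v, ‖a' x‖) * M := by rw [intervalIntegral.integral_mul_const]; ring

theorem integral_abs_deriv_eq_abs_sub {a b : ℝ} (hab : a ≤ b) {w w' : ℝ → ℝ}
    (hw : ∀ x ∈ Icc a b, HasDerivWithinAt w (w' x) (Icc a b) x) (hw' : ContinuousOn w' (Icc a b))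
    (hsign : (∀ x ∈ Icc a b, 0 ≤ w' x) ∨ (∀ x ∈ Icc a b, w' x ≤ 0)) :
    ∫ x in a..b, |w' x| = |w b - w a| := by
  have of_nonneg : ∀ f : ℝ → ℝ, (∀ x ∈ Icc a b, 0 ≤ f x) →
      ∫ x in a..b, |f x| = |∫ x in a..b, f x| :=
    fun f hf => by
      rw [abs_of_nonneg (integral_nonneg hab hf)]
      exact integral_congr fun x hx => abs_of_nonneg (hf x (by rwa [uIcc_of_le hab] at hx))
  rw [← integral_eq_sub_of_hasDerivWithinAt_Icc hab hw hw']
  rcases hsign with hpos | hneg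
  · exact of_nonneg w' hpos
  · simpa only [abs_neg, intervalIntegral.integral_neg] using
      of_nonneg (fun x => -w' x) fun x hx => neg_nonneg.mpr (hneg x hx)

theorem norm_integral_exp_le_of_le_abs_deriv {a b T : ℝ} (hab : a ≤ b) (hT : 0 < T)
    {φ φ' φ'' : ℝ → ℝ}
    (hφ : ∀ x ∈ Icc a b, HasDerivWithinAt φ (φ' x) (Icc a b) x)
    (hφ' : ∀ x ∈ Icc a b, HasDerivWithinAt φ' (φ'' x) (Icc a b) x)
    (hφ'' : ContinuousOn φ'' (Icc a b))
    (hsign : (∀ x ∈ Icc a b, 0 ≤ φ'' x) ∨ (∀ x ∈ Icc a b, φ'' x ≤ 0))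
    (hT' : ∀ x ∈ Icc a b, T ≤ |φ' x|) :
    ‖∫ x in a..b, exp (I * φ x)‖ ≤ 6 / T := by
  have hφc : ContinuousOn φ (Icc a b) := fun x hx => (hφ x hx).continuousWithinAt
  have hφ'c : ContinuousOn φ' (Icc a b) := fun x hx => (hφ' x hx).continuousWithinAt
  have hne : ∀ x ∈ Icc a b, φ' x ≠ 0 := fun x hx h0 => by
    have := hT' x hx
    rw [h0, abs_zero] at this
    linarith
  have hinv : ∀ x ∈ Icc a b, |(φ' x)⁻¹| ≤ 1 / T := fun x hx => by
    rw [abs_inv, one_div]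
    exact inv_anti₀ hT (hT' x hx)
  -- `exp (I * φ) = w * e` with `w = -I / φ'` and `e = (exp (I * φ))'`
  set w : ℝ → ℂ := fun x => -I * ((φ' x)⁻¹ : ℝ)
  set e : ℝ → ℂ := fun x => exp (I * φ x) * (I * φ' x)
  have hw : ∀ x ∈ Icc a b,
      HasDerivWithinAt w (-I * ((-φ'' x / φ' x ^ 2 : ℝ) : ℂ)) (Icc a b) x := fun x hx =>
    (((hφ' x hx).inv (hne x hx)).ofReal_comp).const_mul (-I)
  have hw'c : ContinuousOn (fun x => -φ'' x / φ' x ^ 2) (Icc a b) :=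
    hφ''.neg.div (hφ'c.pow 2) fun x hx => pow_ne_zero 2 (hne x hx)
  have he : ∀ x ∈ Icc a b, HasDerivWithinAt (fun x => exp (I * φ x)) (e x) (Icc a b) x :=
    fun x hx => ((hφ x hx).ofReal_comp.const_mul I).cexp
  have hec : ContinuousOn e (Icc a b) := by fun_prop
  have hprimitive : ∀ x ∈ Icc a b, ‖∫ t in a..x, e t‖ ≤ 2 := fun x hx => by
    rw [integral_eq_sub_of_hasDerivWithinAt_Icc hx.1
      (fun t ht => (he t ⟨ht.1, ht.2.trans hx.2⟩).mono (Icc_subset_Icc_right hx.2))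
      (hec.mono (Icc_subset_Icc_right hx.2))]
    refine (norm_sub_le _ _).trans ?_
    rw [norm_exp_I_mul_ofReal, norm_exp_I_mul_ofReal]
    norm_num
  have hvariation : ∫ x in a..b, ‖-I * ((-φ'' x / φ' x ^ 2 : ℝ) : ℂ)‖ ≤ 2 / T := by
    simp only [norm_mul, norm_neg, norm_I, one_mul, norm_real, Real.norm_eq_abs]
    rw [integral_abs_deriv_eq_abs_sub hab (fun x hx => (hφ' x hx).inv (hne x hx)) hw'c
      (hsign.symm.imp (fun h x hx => ?_) (fun h x hx => ?_))]
    · calc |φ'⁻¹ b - φ'⁻¹ a| ≤ |(φ' b)⁻¹| + |(φ' a)⁻¹| := abs_sub _ _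
        _ ≤ 1 / T + 1 / T :=
          add_le_add (hinv b (right_mem_Icc.mpr hab)) (hinv a (left_mem_Icc.mpr hab))
        _ = 2 / T := by ring
    · exact div_nonneg (neg_nonneg.mpr (h x hx)) (sq_nonneg _)
    · exact div_nonpos_of_nonpos_of_nonneg (neg_nonpos.mpr (h x hx)) (sq_nonneg _)
  have hwb : ‖w b‖ ≤ 1 / T := by
    simpa [w] using hinv b (right_mem_Icc.mpr hab)
  calc ‖∫ x in a..b, exp (I * φ x)‖ = ‖∫ x in a..b, w x * e x‖ := by
        congr 1
        refine integral_congr fun x hx => ?_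
        have : (φ' x : ℂ) ≠ 0 := ofReal_ne_zero.mpr (hne x (by rwa [uIcc_of_le hab] at hx))
        simp only [w, e, ofReal_inv]
        field_simp
        linear_combination I_mul_I
    _ ≤ (1 / T + 2 / T) * 2 :=
        (norm_integral_mul_le_of_norm_primitive_le hab hw (by fun_prop) hec hprimitive).trans
          (by gcongr)
    _ = 6 / T := by ring

theorem norm_integral_exp_le_of_forall_mul_abs_sub_le {k : ℕ} (hk : k ≠ 0) {c A B T x₀ : ℝ}
    (hc : 0 ≤ c) (hT : 0 < T) {φ g : ℝ → ℝ} (hφ : ContinuousOn φ (Icc A B)) (hx₀ : x₀ ∈ Icc A B)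
    (hg : ∀ x ∈ Icc A B, T * |x - x₀| ≤ |g x|)
    (IH : ∀ S > 0, ∀ a b, A ≤ a → a ≤ b → b ≤ B → (∀ x ∈ Icc a b, S ≤ |g x|) →
      ‖∫ x in a..b, exp (I * φ x)‖ ≤ c * S ^ (-1 / (k : ℝ))) :
    ‖∫ x in A..B, exp (I * φ x)‖ ≤ (2 * c + 2) * T ^ (-1 / ((k : ℝ) + 1)) := by
  set δ := T ^ (-1 / ((k : ℝ) + 1))
  have hδ : 0 < δ := Real.rpow_pos_of_pos hT _
  -- `δ` is chosen so that the bound of `IH` at scale `S = T * δ` is again `c * δ`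
  have hscale : (T * δ) ^ (-1 / (k : ℝ)) = δ := by
    have hk' : (k : ℝ) ≠ 0 := Nat.cast_ne_zero.mpr hk
    rw [← Real.rpow_one T, ← Real.rpow_add hT, ← Real.rpow_mul hT.le]
    congr 1
    field_simp
    ring
  have outer : ∀ a b, A ≤ a → a ≤ b → b ≤ B → (a < b → ∀ x ∈ Icc a b, δ ≤ |x - x₀|) →
      ‖∫ x in a..b, exp (I * φ x)‖ ≤ c * δ := by
    intro a b hAa hab hbB hfar
    rcases hab.eq_or_lt with rfl | hlt
    · rw [integral_same, norm_zero]
      positivity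
    rw [← hscale]
    refine IH _ (mul_pos hT hδ) a b hAa hab hbB fun x hx => ?_
    exact (mul_le_mul_of_nonneg_left (hfar hlt x hx) hT.le).trans
      (hg x ⟨hAa.trans hx.1, hx.2.trans hbB⟩)
  set p := max A (x₀ - δ)
  set q := min B (x₀ + δ)
  have hAp : A ≤ p := le_max_left _ _
  have hpx₀ : p ≤ x₀ := max_le hx₀.1 (by linarith)
  have hx₀q : x₀ ≤ q := le_min hx₀.2 (by linarith)
  have hqB : q ≤ B := min_le_left _ _
  have hint : ∀ s ∈ Icc A B, ∀ t ∈ Icc A B,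
      IntervalIntegrable (fun x => exp (I * φ x)) MeasureTheory.volume s t :=
    fun s hs t ht => ((by fun_prop : ContinuousOn (fun x => exp (I * φ x)) (Icc A B)).mono
      (uIcc_subset_Icc hs ht)).intervalIntegrable
  have hleft : ‖∫ x in A..p, exp (I * φ x)‖ ≤ c * δ := by
    refine outer A p le_rfl hAp (hpx₀.trans hx₀.2) fun hAp' x hx => ?_
    have : p = x₀ - δ := max_eq_right (lt_max_iff.mp hAp' |>.resolve_left (lt_irrefl A)).le
    exact le_abs.mpr (Or.inr (by linarith [hx.2]))
  have hright : ‖∫ x in q..B, exp (I * φ x)‖ ≤ c * δ := by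
    refine outer q B (hx₀.1.trans hx₀q) hqB le_rfl fun hqB' x hx => ?_
    have : q = x₀ + δ := min_eq_right (min_lt_iff.mp hqB' |>.resolve_left (lt_irrefl B)).le
    exact le_abs.mpr (Or.inl (by linarith [hx.1]))
  have hmiddle : ‖∫ x in p..q, exp (I * φ x)‖ ≤ 2 * δ := by
    refine (norm_integral_le_of_norm_le_const fun x _ => (norm_exp_I_mul_ofReal (φ x)).le).trans ?_
    rw [one_mul, abs_of_nonneg (by linarith)]
    linarith [min_le_right B (x₀ + δ), le_max_right A (x₀ - δ)]
  have hp : p ∈ Icc A B := ⟨hAp, hpx₀.trans hx₀.2⟩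
  have hq : q ∈ Icc A B := ⟨hx₀.1.trans hx₀q, hqB⟩
  have hA : A ∈ Icc A B := ⟨le_rfl, hx₀.1.trans hx₀.2⟩
  have hB : B ∈ Icc A B := ⟨hx₀.1.trans hx₀.2, le_rfl⟩
  rw [← integral_add_adjacent_intervals (hint A hA p hp) (hint p hp B hB),
    ← integral_add_adjacent_intervals (hint p hp q hq) (hint q hq B hB)]
  calc _ ≤ ‖∫ x in A..p, exp (I * φ x)‖ + (‖∫ x in p..q, exp (I * φ x)‖
        + ‖∫ x in q..B, exp (I * φ x)‖) :=
        (norm_add_le _ _).trans (add_le_add le_rfl (norm_add_le _ _))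
    _ ≤ c * δ + (2 * δ + c * δ) := by gcongr
    _ = (2 * c + 2) * δ := by ring

def IsDerivChainOn (f : ℕ → ℝ → ℝ) (k : ℕ) (s : Set ℝ) : Prop :=
  ∀ j < k, ∀ x ∈ s, HasDerivWithinAt (f j) (f (j + 1) x) s x

namespace IsDerivChainOn

variable {f : ℕ → ℝ → ℝ} {k : ℕ} {s : Set ℝ}

theorem mono (hf : IsDerivChainOn f k s) {t : Set ℝ} (hts : t ⊆ s) : IsDerivChainOn f k t :=
  fun j hj x hx => (hf j hj x (hts hx)).mono hts

theorem of_le (hf : IsDerivChainOn f k s) {j : ℕ} (hjk : j ≤ k) : IsDerivChainOn f j s :=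
  fun i hi => hf i (hi.trans_le hjk)

theorem continuousOn (hf : IsDerivChainOn f k s) {j : ℕ} (hj : j < k) : ContinuousOn (f j) s :=
  fun x hx => (hf j hj x hx).continuousWithinAt

theorem norm_integral_exp_le_succ (hk : k ≠ 0) {c A B T : ℝ} (hc : 0 ≤ c) (hAB : A ≤ B)
    (hT : 0 < T) (hf : IsDerivChainOn f (k + 1) (Icc A B))
    (hcont : ContinuousOn (f (k + 1)) (Icc A B)) (hT' : ∀ x ∈ Icc A B, T ≤ |f (k + 1) x|)
    (IH : ∀ S > 0, ∀ a b, A ≤ a → a ≤ b → b ≤ B → (∀ x ∈ Icc a b, S ≤ |f k x|) →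
      ‖∫ x in a..b, exp (I * f 0 x)‖ ≤ c * S ^ (-1 / (k : ℝ))) :
    ‖∫ x in A..B, exp (I * f 0 x)‖ ≤ (2 * c + 2) * T ^ (-1 / ((k + 1 : ℕ) : ℝ)) := by
  obtain ⟨x₀, hx₀, hanchor⟩ :=
    exists_forall_mul_abs_sub_le_abs_of_le_abs_deriv hAB hT (hf k k.lt_succ_self) hcont hT'
  push_cast
  exact norm_integral_exp_le_of_forall_mul_abs_sub_le hk hc hT (hf.continuousOn k.succ_pos) hx₀
    hanchor IH

end IsDerivChainOn

theorem ContDiffOn.isDerivChainOn_iteratedDerivWithin {n : ℕ} {Ψ : ℝ → ℝ} {s : Set ℝ}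
    (hΨ : ContDiffOn ℝ n Ψ s) (hs : UniqueDiffOn ℝ s) :
    IsDerivChainOn (fun j => iteratedDerivWithin j Ψ s) n s := fun j hj x hx => by
  dsimp only
  rw [iteratedDerivWithin_succ]
  exact ((hΨ.differentiableOn_iteratedDerivWithin (by exact_mod_cast hj) hs) x hx).hasDerivWithinAt

theorem exists_norm_integral_exp_le (k : ℕ) (hk : 2 ≤ k) :
    ∃ c > 0, ∀ T > 0, ∀ a b, a ≤ b → ∀ f : ℕ → ℝ → ℝ, IsDerivChainOn f k (Icc a b) →
      ContinuousOn (f k) (Icc a b) → (∀ x ∈ Icc a b, T ≤ |f k x|) →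
      ‖∫ x in a..b, exp (I * f 0 x)‖ ≤ c * T ^ (-1 / (k : ℝ)) := by
  induction k, hk using Nat.le_induction with
  | base =>
    refine ⟨14, by norm_num, fun T hT a b hab f hf hcont hT' => ?_⟩
    have hsign := isPreconnected_Icc.forall_le_or_forall_le_neg_of_le_abs hcont hT hT'
    convert hf.norm_integral_exp_le_succ one_ne_zero (c := 6) (by norm_num) hab hT hcont hT'
      (fun S hS a' b' ha' hab' hb' hS' => ?_) using 2
    · norm_num
    have hsub : Icc a' b' ⊆ Icc a b := Icc_subset_Icc ha' hb'
    rw [Nat.cast_one, div_one, Real.rpow_neg_one, ← div_eq_mul_inv]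
    refine norm_integral_exp_le_of_le_abs_deriv hab' hS ((hf.mono hsub) 0 (by norm_num))
      ((hf.mono hsub) 1 (by norm_num)) (hcont.mono hsub) ?_ hS'
    exact hsign.imp (fun h x hx => hT.le.trans (h x (hsub hx)))
      (fun h x hx => (h x (hsub hx)).trans (neg_nonpos.mpr hT.le))
  | succ k hk IH =>
    obtain ⟨c, hc, H⟩ := IH
    refine ⟨2 * c + 2, by positivity, fun T hT a b hab f hf hcont hT' => ?_⟩
    refine hf.norm_integral_exp_le_succ (by omega) hc.le hab hT hcont hT'
      fun S hS a' b' ha' hab' hb' hS' => ?_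
    have hsub : Icc a' b' ⊆ Icc a b := Icc_subset_Icc ha' hb'
    exact H S hS a' b' hab' f ((hf.mono hsub).of_le k.le_succ)
      ((hf.continuousOn k.lt_succ_self).mono hsub) hS'

theorem stmt8_vanDerCorput (L : ℕ) (hL : 2 ≤ L) :
    ∃ C : ℝ, 0 < C ∧
      ∀ u v : ℝ, u ≤ v →
      ∀ Ψ : ℝ → ℝ, ContDiffOn ℝ L Ψ (Set.Icc u v) →
      ∀ T : ℝ, 0 < T →
        (∀ lam ∈ Set.Icc u v, T ≤ |iteratedDerivWithin L Ψ (Set.Icc u v) lam|) →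
      ∀ a : ℝ → ℂ, ContDiffOn ℝ 1 a (Set.Icc u v) →
        ‖∫ lam in u..v, a lam * Complex.exp (Complex.I * Ψ lam)‖
          ≤ C * ((⨆ lam : Set.Icc u v, ‖a lam‖) +
                 ∫ lam in u..v, ‖derivWithin a (Set.Icc u v) lam‖)
              * T ^ (-(1 : ℝ) / L) := by
  obtain ⟨C, hC, H⟩ := exists_norm_integral_exp_le L hL
  refine ⟨C, hC, fun u v huv Ψ hΨ T hT hT' a ha => ?_⟩
  rcases huv.eq_or_lt with rfl | hlt
  · rw [integral_same, norm_zero, integral_same, add_zero]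
    have := Real.iSup_nonneg fun lam : Icc u u => norm_nonneg (a lam)
    positivity
  have hud : UniqueDiffOn ℝ (Icc u v) := uniqueDiffOn_Icc hlt
  have hchain := hΨ.isDerivChainOn_iteratedDerivWithin hud
  have hprimitive : ∀ x ∈ Icc u v, ‖∫ t in u..x, exp (I * Ψ t)‖ ≤ C * T ^ (-(1 : ℝ) / L) :=
    fun x hx => by
      have hsub : Icc u x ⊆ Icc u v := Icc_subset_Icc_right hx.2
      simpa using H T hT u x hx.1 _ (hchain.mono hsub)
        ((hΨ.continuousOn_iteratedDerivWithin le_rfl hud).mono hsub) fun y hy => hT' y (hsub hy)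
  have hav : ‖a v‖ ≤ ⨆ lam : Icc u v, ‖a lam‖ :=
    le_ciSup (isCompact_range ha.continuousOn.norm.domRestrict).bddAbove ⟨v, right_mem_Icc.mpr huv⟩
  calc _ ≤ (‖a v‖ + ∫ x in u..v, ‖derivWithin a (Icc u v) x‖) * (C * T ^ (-(1 : ℝ) / L)) :=
        norm_integral_mul_le_of_norm_primitive_le huv
          (fun x hx => ((ha.differentiableOn one_ne_zero) x hx).hasDerivWithinAt)
          (ha.continuousOn_derivWithin hud le_rfl) (by have := hΨ.continuousOn; fun_prop) hprimitive
    _ ≤ ((⨆ lam : Icc u v, ‖a lam‖) + ∫ x in u..v, ‖derivWithin a (Icc u v) x‖)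
          * (C * T ^ (-(1 : ℝ) / L)) := by gcongr
    _ = _ := by ring
end
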